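/- arXiv:2210.13115 — 3 statements merged into one kernel-verified Lean document; each statement's English description precedes it below -/
import Mathlib

section
/- The explicit 4th-order two-step scheme wⁿ⁺¹ = (2I + k²Q + (k⁴/12)Q²)wⁿ - wⁿ⁻¹ applied to w'' = Qw with Q symmetric negative semi-definite is stable if k²ρ(Q) < 12, where ρ(Q) is the spectral radius: all eigenvalues μ of the amplification recurrence satisfy |μ| ≤ 1. Equivalently, for each eigenvalue λ of Q, the scalar recurrence xⁿ⁺¹ = (2 + k²λ + k⁴λ²/12)xⁿ - xⁿ⁻¹ has bounded solutions when k²|λ| < 12. -/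
private lemma root_eq_aux (a s : ℝ) (hs2 : s ^ 2 = 1 - a ^ 2 / 4) :
    ((⟨a / 2, s⟩ : ℂ)) ^ 2 - (a : ℂ) * ⟨a / 2, s⟩ + 1 = 0 := by
  rw [Complex.ext_iff]
  constructor <;>
    simp [pow_two, Complex.mul_re, Complex.mul_im] <;>
    nlinarith [hs2]

/-- Stability of the explicit 4th-order two-step scheme: for each eigenvalue `λ ≤ 0` of a
symmetric negative semi-definite `Q` and time step `k > 0` with `k²|λ| < 12`, every root
`μ` of the characteristic polynomial `μ² - (2 + k²λ + k⁴λ²/12)μ + 1 = 0` of the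
amplification recurrence satisfies `|μ| ≤ 1`; moreover when `λ < 0` the two roots are
distinct. -/
theorem scheme_stability (lam k : ℝ) (hlam : lam ≤ 0) (hk : 0 < k)
    (hcfl : k ^ 2 * |lam| < 12) :
    (∀ μ : ℂ, μ ^ 2 - (2 + k ^ 2 * lam + k ^ 4 * lam ^ 2 / 12) * μ + 1 = 0 →
      ‖μ‖ ≤ 1) ∧
    (lam < 0 → ∃ μ₁ μ₂ : ℂ, μ₁ ≠ μ₂ ∧
      μ₁ ^ 2 - (2 + k ^ 2 * lam + k ^ 4 * lam ^ 2 / 12) * μ₁ + 1 = 0 ∧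
      μ₂ ^ 2 - (2 + k ^ 2 * lam + k ^ 4 * lam ^ 2 / 12) * μ₂ + 1 = 0) := by
  have habs : |lam| = -lam := abs_of_nonpos hlam
  rw [habs] at hcfl
  obtain ⟨a, ha⟩ : ∃ a : ℝ, a = 2 + k ^ 2 * lam + k ^ 4 * lam ^ 2 / 12 := ⟨_, rfl⟩
  have hcoef : (2 + (k:ℂ) ^ 2 * lam + (k:ℂ) ^ 4 * lam ^ 2 / 12) = (a : ℂ) := by
    rw [ha]; push_cast; ring
  have hk2 : (0:ℝ) < k ^ 2 := by positivity
  have ha2 : a ≤ 2 := by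
    nlinarith [mul_nonneg (mul_nonneg hk2.le (neg_nonneg.2 hlam))
      (by linarith : (0:ℝ) ≤ 12 - k ^ 2 * (-lam))]
  have ham2 : -2 < a := by nlinarith [sq_nonneg (k ^ 2 * lam + 6)]
  have h4 : a ^ 2 ≤ 4 := by nlinarith
  constructor
  · intro μ hμ
    rw [hcoef] at hμ
    have hre : μ.re ^ 2 - μ.im ^ 2 - a * μ.re + 1 = 0 := by
      have := congrArg Complex.re hμ
      simp [pow_two, Complex.mul_re, Complex.mul_im] at this
      nlinarith [this]
    have him : μ.im * (2 * μ.re - a) = 0 := by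
      have := congrArg Complex.im hμ
      simp [pow_two, Complex.mul_re, Complex.mul_im] at this
      nlinarith [this]
    have hsq : μ.re ^ 2 + μ.im ^ 2 ≤ 1 := by
      rcases mul_eq_zero.1 him with h0 | h0
      · rw [h0] at hre ⊢
        nlinarith [sq_nonneg (μ.re ^ 2 - 1), sq_nonneg μ.re, hre, h4]
      · nlinarith [hre, mul_eq_zero_of_left h0 μ.re]
    have hnsq := Complex.sq_norm μ
    rw [Complex.normSq_apply] at hnsq
    nlinarith [norm_nonneg μ, hnsq, hsq]
  · intro hlt
    have halt : a < 2 := by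
      nlinarith [mul_pos (mul_pos hk2 (neg_pos.2 hlt))
        (by linarith : (0:ℝ) < 12 - k ^ 2 * (-lam))]
    have hpos : (0:ℝ) < 1 - a ^ 2 / 4 := by nlinarith
    obtain ⟨s, hs2, hsne⟩ : ∃ s : ℝ, s ^ 2 = 1 - a ^ 2 / 4 ∧ s ≠ 0 :=
      ⟨Real.sqrt (1 - a ^ 2 / 4), Real.sq_sqrt hpos.le, by positivity⟩
    refine ⟨⟨a / 2, s⟩, ⟨a / 2, -s⟩, ?_, ?_, ?_⟩
    · intro h
      have := congrArg Complex.im h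
      simp at this
      exact hsne (by linarith)
    · rw [hcoef]
      exact root_eq_aux a s hs2
    · rw [hcoef]
      exact root_eq_aux a (-s) (by rw [neg_pow]; simpa using hs2)
end

section
/- For real a with |a| < 2, both roots of μ² - aμ + 1 = 0 are complex conjugates of modulus exactly 1; consequently, setting a = 2 + k²λ + k⁴λ²/12 with λ < 0 and k²|λ| < 12 gives |a| < 2 and hence marginally stable roots. -/
/-- For real `a` with `|a| < 2`, both roots of `μ² - aμ + 1 = 0` are complex conjugates of
modulus exactly `1`; consequently, for `λ < 0` and `k > 0` with `k²(-λ) < 12`, the value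
`a = 2 + k²λ + k⁴λ²/12` satisfies `|a| < 2`, hence marginally stable roots. -/
theorem unit_modulus_roots :
    (∀ a : ℝ, |a| < 2 → ∀ μ : ℂ, μ ^ 2 - (a : ℂ) * μ + 1 = 0 →
      ‖μ‖ = 1 ∧
      (starRingEnd ℂ μ) ^ 2 - (a : ℂ) * (starRingEnd ℂ μ) + 1 = 0) ∧
    (∀ lam k : ℝ, lam < 0 → 0 < k → k ^ 2 * (-lam) < 12 →
      |2 + k ^ 2 * lam + k ^ 4 * lam ^ 2 / 12| < 2) := by
  constructor
  · intro a ha μ hμ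
    have ha2 : a ^ 2 < 4 := by
      have := abs_lt.mp ha
      nlinarith [this.1, this.2]
    constructor
    · -- real and imaginary parts
      have hre := congrArg Complex.re hμ
      have him := congrArg Complex.im hμ
      simp [Complex.add_re, Complex.sub_re, Complex.mul_re, Complex.mul_im, pow_two] at hre him
      -- him : y*(2x - a) = 0 form
      set x := μ.re
      set y := μ.im
      have hy : y = 0 ∨ x * y + y * x - a * y = 0 := by
        right; linarith [him]
      rcases eq_or_ne y 0 with hy0 | hy0
      · exfalso
        rw [hy0] at hre
        nlinarith [hre, sq_nonneg (2*x - a)]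
      · have hx : 2 * x = a := by
          have : y * (x + x - a) = 0 := by ring_nf; linarith [him]
          rcases mul_eq_zero.mp this with h | h
          · exact absurd h hy0
          · linarith
        have hnorm : x ^ 2 + y ^ 2 = 1 := by linear_combination -hre + x * hx
        have : ‖μ‖ ^ 2 = 1 := by
          rw [Complex.sq_norm, Complex.normSq_apply]
          nlinarith [hnorm]
        have h1 : (‖μ‖ - 1) * (‖μ‖ + 1) = 0 := by nlinarith [this]
        rcases mul_eq_zero.mp h1 with h | h
        · linarith
        · linarith [norm_nonneg μ]
    · have := congrArg (starRingEnd ℂ) hμ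
      simpa [map_sub, map_add, map_mul, map_pow, Complex.conj_ofReal] using this
  · intro lam k hlam hk ht
    have ht0 : 0 < k ^ 2 * (-lam) := mul_pos (pow_pos hk 2) (by linarith)
    set t : ℝ := k ^ 2 * (-lam) with htdef
    have heq : 2 + k ^ 2 * lam + k ^ 4 * lam ^ 2 / 12 = 2 - t + t ^ 2 / 12 := by
      rw [htdef]; ring
    rw [heq, abs_lt]
    constructor <;> nlinarith [sq_nonneg (t - 6)]
end

section
/- The discrete single-block energy E = ‖v_t‖²_{H̄} + c²vᵀ(H_y M_x + H_x M_y)v is conserved (dE/dt = 0) for solutions of v_tt = c²D_L v + SAT with homogeneous Neumann SAT terms, where the SAT terms are c²H_x⁻¹e_Wᵀd_W v - c²H_x⁻¹e_Eᵀd_E v + c²H_y⁻¹e_Sᵀd_S v - c²H_y⁻¹e_Nᵀd_N v. -/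
open Matrix Kronecker

/-- `vᵀ ⊗ I`: the boundary restriction operator in the `x`-direction. -/
def xBdry {m : ℕ} (v : Fin m → ℝ) : Matrix (Fin m) (Fin m × Fin m) ℝ :=
  Matrix.of fun j p => v p.1 * (if p.2 = j then 1 else 0)

/-- `I ⊗ vᵀ`: the boundary restriction operator in the `y`-direction. -/
def yBdry {m : ℕ} (v : Fin m → ℝ) : Matrix (Fin m) (Fin m × Fin m) ℝ :=
  Matrix.of fun i p => (if p.1 = i then 1 else 0) * v p.2

lemma xBdry_t_mul {m : ℕ} (a b : Fin m → ℝ) :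
    (xBdry a)ᵀ * xBdry b = (vecMulVec a b) ⊗ₖ (1 : Matrix (Fin m) (Fin m) ℝ) := by
  ext ⟨p1, p2⟩ ⟨q1, q2⟩
  simp [xBdry, Matrix.mul_apply, vecMulVec_apply, Matrix.one_apply, mul_ite, ite_mul,
    Finset.sum_ite_eq, mul_comm, mul_assoc, mul_left_comm]

lemma yBdry_t_mul {m : ℕ} (a b : Fin m → ℝ) :
    (yBdry a)ᵀ * yBdry b = (1 : Matrix (Fin m) (Fin m) ℝ) ⊗ₖ (vecMulVec a b) := by
  ext ⟨p1, p2⟩ ⟨q1, q2⟩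
  simp [yBdry, Matrix.mul_apply, vecMulVec_apply, Matrix.one_apply, mul_ite, ite_mul,
    Finset.sum_ite_eq, mul_comm, mul_assoc, mul_left_comm]

lemma hasDerivAt_dot {n : Type*} [Fintype n] (B : Matrix n n ℝ)
    {u w : ℝ → n → ℝ} {u' w' : n → ℝ} {t : ℝ}
    (hu : HasDerivAt u u' t) (hw : HasDerivAt w w' t) :
    HasDerivAt (fun s => u s ⬝ᵥ B.mulVec (w s))
      (u' ⬝ᵥ B.mulVec (w t) + u t ⬝ᵥ B.mulVec w') t := by
  have hu1 : ∀ i, HasDerivAt (fun s => u s i) (u' i) t := hasDerivAt_pi.mp hu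
  have hw1 : ∀ i, HasDerivAt (fun s => w s i) (w' i) t := hasDerivAt_pi.mp hw
  have h : ∀ i ∈ Finset.univ, HasDerivAt (fun s => u s i * ∑ j, B i j * w s j)
      (u' i * (∑ j, B i j * w t j) + u t i * (∑ j, B i j * w' j)) t := by
    intro i _
    exact (hu1 i).mul (HasDerivAt.fun_sum fun j _ => (hw1 j).const_mul (B i j))
  have := HasDerivAt.fun_sum h
  simp only [dotProduct, Matrix.mulVec, Finset.sum_add_distrib] at this ⊢
  exact this

section Key
variable {m : ℕ} (H M : Matrix (Fin m) (Fin m) ℝ)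

lemma key_identity (hdiag : H.IsDiag) (hH : H.PosDef) (hM : M.PosSemidef)
    (el er dl dr : Fin m → ℝ) (D₂ : Matrix (Fin m) (Fin m) ℝ)
    (hD : D₂ = H⁻¹ * (-M + vecMulVec er dr - vecMulVec el dl)) :
    ((H ⊗ₖ (1 : Matrix (Fin m) (Fin m) ℝ)) * ((1 : Matrix (Fin m) (Fin m) ℝ) ⊗ₖ H)) *
      ((D₂ ⊗ₖ (1 : Matrix (Fin m) (Fin m) ℝ) + (1 : Matrix (Fin m) (Fin m) ℝ) ⊗ₖ D₂)
        + ((H ⊗ₖ (1 : Matrix (Fin m) (Fin m) ℝ))⁻¹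
            * ((xBdry el)ᵀ * xBdry dl - (xBdry er)ᵀ * xBdry dr))
        + (((1 : Matrix (Fin m) (Fin m) ℝ) ⊗ₖ H)⁻¹
            * ((yBdry el)ᵀ * yBdry dl - (yBdry er)ᵀ * yBdry dr)))
    = -((((1 : Matrix (Fin m) (Fin m) ℝ) ⊗ₖ H) * (M ⊗ₖ (1 : Matrix (Fin m) (Fin m) ℝ)))
        + ((H ⊗ₖ (1 : Matrix (Fin m) (Fin m) ℝ)) * ((1 : Matrix (Fin m) (Fin m) ℝ) ⊗ₖ M))) := by
  have hdet : IsUnit H.det := isUnit_iff_ne_zero.mpr (ne_of_gt hH.det_pos)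
  have hHinv : H * H⁻¹ = 1 := Matrix.mul_nonsing_inv H hdet
  have hHD : H * D₂ = -M + vecMulVec er dr - vecMulVec el dl := by
    rw [hD, ← Matrix.mul_assoc, hHinv, Matrix.one_mul]
  rw [xBdry_t_mul, xBdry_t_mul, yBdry_t_mul, yBdry_t_mul,
    Matrix.inv_kronecker, Matrix.inv_kronecker, inv_one]
  simp only [Matrix.mul_add, Matrix.mul_sub, Matrix.mul_assoc]
  simp only [← mul_kronecker_mul, Matrix.mul_one, Matrix.one_mul]
  simp only [← Matrix.mul_assoc, hHinv, hHD, Matrix.one_mul]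
  have e1 : (-M + vecMulVec er dr - vecMulVec el dl) ⊗ₖ H
      = (-M) ⊗ₖ H + (vecMulVec er dr) ⊗ₖ H - (vecMulVec el dl) ⊗ₖ H := by
    rw [sub_eq_add_neg, sub_eq_add_neg, add_kronecker, add_kronecker]
    congr 1
    ext ⟨p1,p2⟩ ⟨q1,q2⟩
    simp [kroneckerMap_apply]
  have e2 : H ⊗ₖ (-M + vecMulVec er dr - vecMulVec el dl)
      = H ⊗ₖ (-M) + H ⊗ₖ (vecMulVec er dr) - H ⊗ₖ (vecMulVec el dl) := by
    rw [sub_eq_add_neg, sub_eq_add_neg, kronecker_add, kronecker_add]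
    congr 1
    ext ⟨p1,p2⟩ ⟨q1,q2⟩
    simp [kroneckerMap_apply]
  have e3 : (-M) ⊗ₖ H = -(M ⊗ₖ H) := by
    ext ⟨p1,p2⟩ ⟨q1,q2⟩; simp [kroneckerMap_apply]
  have e4 : H ⊗ₖ (-M) = -(H ⊗ₖ M) := by
    ext ⟨p1,p2⟩ ⟨q1,q2⟩; simp [kroneckerMap_apply]
  rw [e1, e2, e3, e4]
  abel

end Key

lemma mulVec_dot {n : Type*} [Fintype n] (B : Matrix n n ℝ) (x y : n → ℝ) :
    (B.mulVec x) ⬝ᵥ y = x ⬝ᵥ Bᵀ.mulVec y := by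
  rw [Matrix.mulVec_transpose, dotProduct_comm, Matrix.dotProduct_mulVec, dotProduct_comm]

/-- The discrete single-block energy
`E = ‖v_t‖²_{H̄} + c²vᵀ(H_y M_x + H_x M_y)v` is conserved for solutions of
`v_tt = c²D_L v + c²H_x⁻¹(e_Wᵀd_W - e_Eᵀd_E)v + c²H_y⁻¹(e_Sᵀd_S - e_Nᵀd_N)v`,
the SBP-SAT discretization of the wave equation with homogeneous Neumann
boundary conditions. -/
theorem discrete_single_block_energy_conservation {m : ℕ}
    (H M : Matrix (Fin m) (Fin m) ℝ)
    (hdiag : H.IsDiag) (hH : H.PosDef) (hM : M.PosSemidef)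
    (el er dl dr : Fin m → ℝ) (D₂ : Matrix (Fin m) (Fin m) ℝ)
    (hD : D₂ = H⁻¹ * (-M + vecMulVec er dr - vecMulVec el dl))
    (c : ℝ) (hc : 0 < c)
    (v v' : ℝ → (Fin m × Fin m → ℝ))
    (hv : ∀ t, HasDerivAt v (v' t) t)
    (hv' : ∀ t, HasDerivAt v'
      ((c ^ 2 • (D₂ ⊗ₖ (1 : Matrix (Fin m) (Fin m) ℝ) + (1 : Matrix (Fin m) (Fin m) ℝ) ⊗ₖ D₂)
        + c ^ 2 • ((H ⊗ₖ (1 : Matrix (Fin m) (Fin m) ℝ))⁻¹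
            * ((xBdry el)ᵀ * xBdry dl - (xBdry er)ᵀ * xBdry dr))
        + c ^ 2 • (((1 : Matrix (Fin m) (Fin m) ℝ) ⊗ₖ H)⁻¹
            * ((yBdry el)ᵀ * yBdry dl - (yBdry er)ᵀ * yBdry dr))).mulVec (v t)) t) :
    ∀ t, deriv (fun t =>
      (v' t) ⬝ᵥ ((H ⊗ₖ (1 : Matrix (Fin m) (Fin m) ℝ))
          * ((1 : Matrix (Fin m) (Fin m) ℝ) ⊗ₖ H)).mulVec (v' t)
      + c ^ 2 * ((v t) ⬝ᵥ (((1 : Matrix (Fin m) (Fin m) ℝ) ⊗ₖ H)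
            * (M ⊗ₖ (1 : Matrix (Fin m) (Fin m) ℝ))
          + (H ⊗ₖ (1 : Matrix (Fin m) (Fin m) ℝ))
            * ((1 : Matrix (Fin m) (Fin m) ℝ) ⊗ₖ M)).mulVec (v t))) t = 0 := by
  intro t
  set Hb : Matrix (Fin m × Fin m) (Fin m × Fin m) ℝ := (H ⊗ₖ (1 : Matrix (Fin m) (Fin m) ℝ)) * ((1 : Matrix (Fin m) (Fin m) ℝ) ⊗ₖ H) with hHb
  set A : Matrix (Fin m × Fin m) (Fin m × Fin m) ℝ :=
    ((1 : Matrix (Fin m) (Fin m) ℝ) ⊗ₖ H) * (M ⊗ₖ (1 : Matrix (Fin m) (Fin m) ℝ)) + (H ⊗ₖ (1 : Matrix (Fin m) (Fin m) ℝ)) * ((1 : Matrix (Fin m) (Fin m) ℝ) ⊗ₖ M) with hA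
  set K : Matrix (Fin m × Fin m) (Fin m × Fin m) ℝ :=
    (c ^ 2 • (D₂ ⊗ₖ (1 : Matrix (Fin m) (Fin m) ℝ) + (1 : Matrix (Fin m) (Fin m) ℝ) ⊗ₖ D₂)
      + c ^ 2 • ((H ⊗ₖ (1 : Matrix (Fin m) (Fin m) ℝ))⁻¹ * ((xBdry el)ᵀ * xBdry dl - (xBdry er)ᵀ * xBdry dr))
      + c ^ 2 • (((1 : Matrix (Fin m) (Fin m) ℝ) ⊗ₖ H)⁻¹ * ((yBdry el)ᵀ * yBdry dl - (yBdry er)ᵀ * yBdry dr))) with hK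
  -- basic symmetry facts
  have hHsymm : Hᵀ = H := hdiag.isSymm
  have hMsymm : Mᵀ = M := by
    have h := hM.isHermitian.eq
    simpa using h
  have hHbeq : Hb = H ⊗ₖ H := by
    rw [hHb, ← mul_kronecker_mul, Matrix.mul_one, Matrix.one_mul]
  have hAeq : A = M ⊗ₖ H + H ⊗ₖ M := by
    rw [hA, ← mul_kronecker_mul, ← mul_kronecker_mul, Matrix.mul_one, Matrix.one_mul]
  have hHbsymm : Hbᵀ = Hb := by
    rw [hHbeq, ← kroneckerMap_transpose, hHsymm]
  have hAsymm : Aᵀ = A := by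
    rw [hAeq, Matrix.transpose_add, ← kroneckerMap_transpose, ← kroneckerMap_transpose,
      hHsymm, hMsymm]
  -- the key identity
  have hKeyRaw := key_identity H M hdiag hH hM el er dl dr D₂ hD
  have hKey : Hb * K = -(c ^ 2 • A) := by
    rw [hK, Matrix.mul_add, Matrix.mul_add, Matrix.mul_smul, Matrix.mul_smul,
      Matrix.mul_smul, ← smul_add, ← smul_add, ← Matrix.mul_add, ← Matrix.mul_add]
    rw [hHb, hKeyRaw, ← hA, smul_neg]
  have hKeyT : Kᵀ * Hb = -(c ^ 2 • A) := by
    have := congrArg Matrix.transpose hKey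
    rwa [Matrix.transpose_mul, hHbsymm, Matrix.transpose_neg, Matrix.transpose_smul,
      hAsymm] at this
  -- the derivative of the energy
  have hE : HasDerivAt (fun t =>
      (v' t) ⬝ᵥ Hb.mulVec (v' t) + c ^ 2 * ((v t) ⬝ᵥ A.mulVec (v t)))
      ((K.mulVec (v t)) ⬝ᵥ Hb.mulVec (v' t) + (v' t) ⬝ᵥ Hb.mulVec (K.mulVec (v t))
        + c ^ 2 * ((v' t) ⬝ᵥ A.mulVec (v t) + (v t) ⬝ᵥ A.mulVec (v' t))) t := by
    exact (hasDerivAt_dot Hb (hv' t) (hv' t)).add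
      ((hasDerivAt_dot A (hv t) (hv t)).const_mul (c ^ 2))
  have hzero : (K.mulVec (v t)) ⬝ᵥ Hb.mulVec (v' t) + (v' t) ⬝ᵥ Hb.mulVec (K.mulVec (v t))
        + c ^ 2 * ((v' t) ⬝ᵥ A.mulVec (v t) + (v t) ⬝ᵥ A.mulVec (v' t)) = 0 := by
    rw [mulVec_dot, Matrix.mulVec_mulVec, Matrix.mulVec_mulVec, hKeyT, hKey]
    simp only [Matrix.neg_mulVec, Matrix.smul_mulVec, dotProduct_neg,
      dotProduct_smul, smul_eq_mul]
    ring
  rw [hzero] at hE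
  exact hE.deriv
end
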